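/- arXiv:0802.3137 — 4 statements merged into one kernel-verified Lean document; each statement's English description precedes it below -/
import Mathlib

section
/- Let P be a finite ground normal logic program (every rule r has exactly one head atom) that is negation-stratified, i.e., there exists a function ℓ from atoms to ℕ such that for every rule r with head atom h: ℓ(a) ≤ ℓ(h) for every a ∈ B+(r) and ℓ(a) < ℓ(h) for every a ∈ B-(r). Then P has exactly one answer set. -/
/-- A ground disjunctive rule: head, positive body, negative body (finite sets of atoms). -/
structure Rule (α : Type*) where
  head : Finset α
  pos : Finset α
  neg : Finset α

/-- An interpretation `I` satisfies rule `r`. -/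
def Rule.sat {α : Type*} (I : Set α) (r : Rule α) : Prop :=
  ((∀ a ∈ r.pos, a ∈ I) ∧ (∀ a ∈ r.neg, a ∉ I)) → ∃ a ∈ r.head, a ∈ I

/-- `I` is a model of the program `P`. -/
def isModel {α : Type*} (I : Set α) (P : Set (Rule α)) : Prop :=
  ∀ r ∈ P, r.sat I

/-- The Gelfond-Lifschitz reduct `P^X`: delete rules whose negative body intersects `X`,
and strip the negative bodies from the remaining rules. -/
def reduct {α : Type*} (P : Set (Rule α)) (X : Set α) : Set (Rule α) :=
  { r' | ∃ r ∈ P, (∀ a ∈ r.neg, a ∉ X) ∧ r' = ⟨r.head, r.pos, ∅⟩ }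

/-- `X` is an answer set of `P`: `X` is a minimal model of the reduct `P^X`. -/
def isAnswerSet {α : Type*} (X : Set α) (P : Set (Rule α)) : Prop :=
  isModel X (reduct P X) ∧ ∀ Y ⊆ X, isModel Y (reduct P X) → Y = X

/-!
For a normal program, `X` is an answer set iff it is a fixed point of the Gelfond–Lifschitz
operator `Γ X = {atoms derivable in P^X}`. Along a stratification `ℓ`, whether an atom of level
`n` is derivable in `P^X` depends only on the atoms of `X` of level `< n`. So `Γ` is a
contraction for the ultrametric "first level at which two sets differ" and has exactly one fixed
point: two fixed points agree level by level, and the iterates `Γⁿ ∅` stabilise on each level.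
-/

section FixedPoint

variable {α : Type*}

def AgreeBelow (ℓ : α → ℕ) (n : ℕ) (X Y : Set α) : Prop :=
  ∀ a, ℓ a < n → (a ∈ X ↔ a ∈ Y)

def IsLevelContraction (ℓ : α → ℕ) (F : Set α → Set α) : Prop :=
  ∀ n X Y, AgreeBelow ℓ n X Y → AgreeBelow ℓ (n + 1) (F X) (F Y)

/-- The limit of the iterates `F^[n] ∅`, which are eventually constant on every level. -/
def stratifiedFixedPoint (ℓ : α → ℕ) (F : Set α → Set α) : Set α :=
  {a | a ∈ F^[ℓ a + 1] ∅}

variable {ℓ : α → ℕ}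

theorem AgreeBelow.zero (X Y : Set α) : AgreeBelow ℓ 0 X Y :=
  fun _ h => absurd h (Nat.not_lt_zero _)

theorem AgreeBelow.symm {n : ℕ} {X Y : Set α} (h : AgreeBelow ℓ n X Y) : AgreeBelow ℓ n Y X :=
  fun a ha => (h a ha).symm

theorem AgreeBelow.trans {n : ℕ} {X Y Z : Set α} (hXY : AgreeBelow ℓ n X Y)
    (hYZ : AgreeBelow ℓ n Y Z) : AgreeBelow ℓ n X Z :=
  fun a ha => (hXY a ha).trans (hYZ a ha)

theorem AgreeBelow.mono {m n : ℕ} {X Y : Set α} (hmn : m ≤ n) (h : AgreeBelow ℓ n X Y) :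
    AgreeBelow ℓ m X Y :=
  fun a ha => h a (ha.trans_le hmn)

theorem eq_of_forall_agreeBelow {X Y : Set α} (h : ∀ n, AgreeBelow ℓ n X Y) : X = Y :=
  Set.ext fun a => h (ℓ a + 1) a (Nat.lt_succ_self _)

variable {F : Set α → Set α}

theorem IsLevelContraction.agreeBelow_iterate_succ (hF : IsLevelContraction ℓ F) (n : ℕ) :
    AgreeBelow ℓ n (F^[n] ∅) (F^[n + 1] ∅) := by
  induction n with
  | zero => exact AgreeBelow.zero _ _
  | succ n ih =>
    rw [Function.iterate_succ_apply' F n, Function.iterate_succ_apply' F (n + 1)]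
    exact hF n _ _ ih

theorem IsLevelContraction.agreeBelow_iterate_of_le (hF : IsLevelContraction ℓ F) {m n : ℕ}
    (hmn : m ≤ n) : AgreeBelow ℓ m (F^[m] ∅) (F^[n] ∅) := by
  induction n, hmn using Nat.le_induction with
  | base => exact fun _ _ => Iff.rfl
  | succ n hmn ih => exact ih.trans ((hF.agreeBelow_iterate_succ n).mono hmn)

theorem IsLevelContraction.agreeBelow_stratifiedFixedPoint_iterate (hF : IsLevelContraction ℓ F)
    (n : ℕ) : AgreeBelow ℓ n (stratifiedFixedPoint ℓ F) (F^[n] ∅) :=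
  fun a ha => hF.agreeBelow_iterate_of_le ha a (Nat.lt_succ_self _)

theorem IsLevelContraction.map_stratifiedFixedPoint (hF : IsLevelContraction ℓ F) :
    F (stratifiedFixedPoint ℓ F) = stratifiedFixedPoint ℓ F := by
  ext a
  have h := hF (ℓ a) _ _ (hF.agreeBelow_stratifiedFixedPoint_iterate (ℓ a)) a
    (Nat.lt_succ_self _)
  rwa [← Function.iterate_succ_apply' F] at h

theorem IsLevelContraction.existsUnique_fixedPoint (hF : IsLevelContraction ℓ F) :
    ∃! X, F X = X := by
  refine ⟨stratifiedFixedPoint ℓ F, hF.map_stratifiedFixedPoint, fun Y hY => ?_⟩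
  refine eq_of_forall_agreeBelow (ℓ := ℓ) fun n => ?_
  induction n with
  | zero => exact AgreeBelow.zero _ _
  | succ n ih => simpa only [hY, hF.map_stratifiedFixedPoint] using hF n _ _ ih

end FixedPoint

section AnswerSet

variable {α : Type*}

/-- Derivability by the rules of `Q`, ignoring negative bodies. -/
inductive Derivable (Q : Set (Rule α)) : α → Prop
  | step (r : Rule α) (h : α) (hr : r ∈ Q) (hh : h ∈ r.head)
      (hpos : ∀ a ∈ r.pos, Derivable Q a) : Derivable Q h

/-- The Gelfond–Lifschitz operator. -/
def glOp (P : Set (Rule α)) (X : Set α) : Set α := {a | Derivable (reduct P X) a}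

variable {P : Set (Rule α)}

theorem glOp_subset_of_isModel (hnormal : ∀ r ∈ P, r.head.card = 1) {X I : Set α}
    (hI : isModel I (reduct P X)) : glOp P X ⊆ I := by
  intro a ha
  induction ha with
  | step r' h hr' hh _ ih =>
    obtain ⟨r, hr, hneg, rfl⟩ := hr'
    obtain ⟨b, hb, hbI⟩ := hI _ ⟨r, hr, hneg, rfl⟩ ⟨ih, by simp⟩
    obtain ⟨c, hc⟩ := Finset.card_eq_one.mp (hnormal r hr)
    rw [hc, Finset.mem_singleton] at hb hh
    exact hh ▸ hb ▸ hbI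

theorem isModel_glOp (hhead : ∀ r ∈ P, r.head.Nonempty) (X : Set α) :
    isModel (glOp P X) (reduct P X) := by
  rintro _ ⟨r, hr, hneg, rfl⟩ ⟨hpos, -⟩
  obtain ⟨h, hh⟩ := hhead r hr
  exact ⟨h, hh, Derivable.step _ h ⟨r, hr, hneg, rfl⟩ hh hpos⟩

theorem isAnswerSet_iff_glOp_eq (hnormal : ∀ r ∈ P, r.head.card = 1) (X : Set α) :
    isAnswerSet X P ↔ glOp P X = X := by
  have hmodel := isModel_glOp (fun r hr => Finset.card_pos.mp (hnormal r hr ▸ one_pos)) X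
  constructor
  · rintro ⟨hX, hmin⟩
    exact hmin _ (glOp_subset_of_isModel hnormal hX) hmodel
  · intro hfix
    refine ⟨by rwa [hfix] at hmodel, fun Y hYX hY => subset_antisymm hYX ?_⟩
    exact hfix ▸ glOp_subset_of_isModel hnormal hY

def IsStratification (ℓ : α → ℕ) (P : Set (Rule α)) : Prop :=
  ∀ r ∈ P, ∀ h ∈ r.head, (∀ a ∈ r.pos, ℓ a ≤ ℓ h) ∧ (∀ a ∈ r.neg, ℓ a < ℓ h)

variable {ℓ : α → ℕ}

/-- A rule deriving an atom of level `≤ n` has its negative body below level `n`,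
so it survives in `P^Y` as soon as it survives in `P^X`. -/
theorem mem_glOp_of_agreeBelow (hstrat : IsStratification ℓ P) {n : ℕ} {X Y : Set α}
    (hXY : AgreeBelow ℓ n X Y) {a : α} (ha : a ∈ glOp P X) (hn : ℓ a ≤ n) : a ∈ glOp P Y := by
  induction ha with
  | step r' h hr' hh _ ih =>
    obtain ⟨r, hr, hneg, rfl⟩ := hr'
    have hlev := hstrat r hr h hh
    refine Derivable.step _ h ⟨r, hr, fun b hb hbY => ?_, rfl⟩ hh fun b hb => ih b hb ?_
    · exact hneg b hb ((hXY b ((hlev.2 b hb).trans_le hn)).mpr hbY)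
    · exact (hlev.1 b hb).trans hn

theorem isLevelContraction_glOp (hstrat : IsStratification ℓ P) :
    IsLevelContraction ℓ (glOp P) :=
  fun _ _ _ hXY _ ha =>
    ⟨fun h => mem_glOp_of_agreeBelow hstrat hXY h (Nat.lt_succ_iff.mp ha),
      fun h => mem_glOp_of_agreeBelow hstrat hXY.symm h (Nat.lt_succ_iff.mp ha)⟩

end AnswerSet

theorem stratified_normal_unique_answerSet_general {α : Type*} (P : Set (Rule α))
    (hnormal : ∀ r ∈ P, r.head.card = 1)
    (hstrat : ∃ ℓ : α → ℕ, ∀ r ∈ P, ∀ h ∈ r.head,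
        (∀ a ∈ r.pos, ℓ a ≤ ℓ h) ∧ (∀ a ∈ r.neg, ℓ a < ℓ h)) :
    ∃! X : Set α, isAnswerSet X P := by
  obtain ⟨ℓ, hℓ⟩ := hstrat
  simp_rw [isAnswerSet_iff_glOp_eq hnormal]
  exact (isLevelContraction_glOp hℓ).existsUnique_fixedPoint

/-- a finite ground normal negation-stratified program has exactly one
answer set. -/
theorem stratified_normal_unique_answerSet {α : Type*} (P : Set (Rule α)) (hP : P.Finite)
    (hnormal : ∀ r ∈ P, r.head.card = 1)
    (hstrat : ∃ ℓ : α → ℕ, ∀ r ∈ P, ∀ h ∈ r.head,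
        (∀ a ∈ r.pos, ℓ a ≤ ℓ h) ∧ (∀ a ∈ r.neg, ℓ a < ℓ h)) :
    ∃! X : Set α, isAnswerSet X P :=
  stratified_normal_unique_answerSet_general P hnormal hstrat
end

section
/- The violation of a single weak constraint of priority level i is more expensive than the violation of all weak constraints of lower levels: for every level i with 1 ≤ i ≤ lmax and every w0 ∈ WC with level(w0) = i, it holds that f(i)·weight(w0) > Σ_{w ∈ WC, level(w) < i} f(level(w))·weight(w). -/
/-!
The weights `f` grow fast enough that `f (n + 1) = f n * (|WC| * wmax) + 1` exceeds the cost of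
violating every constraint at a level of at most `n`: each such constraint costs at most
`f n * wmax` because `f` is monotone on levels `≥ 1`, and there are at most `|WC|` of them.
-/

theorem monotoneOn_Ici_one_of_rec {f : ℕ → ℕ} {c : ℕ} (hc : 1 ≤ c)
    (hfs : ∀ n, 1 ≤ n → f (n + 1) = f n * c + 1) :
    MonotoneOn f (Set.Ici 1) :=
  monotoneOn_nat_Ici_of_le_succ fun n hn => by
    rw [hfs n hn]
    exact (Nat.le_mul_of_pos_right _ hc).trans (Nat.le_succ _)

theorem sum_filter_level_lt_lt_of_rec {ι : Type*} {WC : Finset ι} (hWC : WC.Nonempty)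
    {weight level : ι → ℕ} {wmax : ℕ} (hwmax : 1 ≤ wmax) (hwle : ∀ w ∈ WC, weight w ≤ wmax)
    (hlev : ∀ w ∈ WC, 1 ≤ level w) {f : ℕ → ℕ} (hf1 : f 1 = 1)
    (hfs : ∀ n, 1 ≤ n → f (n + 1) = f n * (WC.card * wmax) + 1) {i : ℕ} (hi : 1 ≤ i) :
    ∑ w ∈ WC.filter (fun w => level w < i), f (level w) * weight w < f i := by
  obtain ⟨n, rfl⟩ : ∃ n, i = n + 1 := ⟨i - 1, by omega⟩
  rcases Nat.eq_zero_or_pos n with rfl | hn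
  · have hempty : WC.filter (fun w => level w < 0 + 1) = ∅ :=
      Finset.filter_eq_empty_iff.mpr fun w hw => by have := hlev w hw; omega
    rw [hempty, Finset.sum_empty, hf1]
    exact Nat.one_pos
  have hmono := monotoneOn_Ici_one_of_rec (Nat.one_le_iff_ne_zero.mpr
    (Nat.mul_ne_zero (Finset.card_pos.mpr hWC).ne' (by omega))) hfs
  have hterm : ∀ w ∈ WC.filter (fun w => level w < n + 1), f (level w) * weight w ≤ f n * wmax := by
    intro w hw
    rw [Finset.mem_filter] at hw
    exact Nat.mul_le_mul (hmono (Set.mem_Ici.mpr (hlev w hw.1)) (Set.mem_Ici.mpr hn)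
      (by omega)) (hwle w hw.1)
  calc ∑ w ∈ WC.filter (fun w => level w < n + 1), f (level w) * weight w
      ≤ (WC.filter (fun w => level w < n + 1)).card * (f n * wmax) :=
        Finset.sum_le_card_nsmul _ _ _ hterm
    _ ≤ WC.card * (f n * wmax) := Nat.mul_le_mul_right _ (Finset.card_filter_le _ _)
    _ < f (n + 1) := by
      rw [hfs n hn, mul_left_comm]
      exact Nat.lt_succ_self _

theorem single_violation_dominates_lower_levels_general {ι : Type*}
    (WC : Finset ι) (hWC : WC.Nonempty)
    (weight level : ι → ℕ) (wmax lmax : ℕ) (hwmax : 1 ≤ wmax)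
    (hw1 : ∀ w ∈ WC, 1 ≤ weight w) (hwle : ∀ w ∈ WC, weight w ≤ wmax)
    (hlev : ∀ w ∈ WC, level w ∈ Finset.Icc 1 lmax)
    (f : ℕ → ℕ) (hf1 : f 1 = 1)
    (hfs : ∀ n : ℕ, 1 ≤ n → f (n + 1) = f n * (WC.card * wmax) + 1)
    (i : ℕ) (hi1 : 1 ≤ i)
    (w0 : ι) (hw0 : w0 ∈ WC) :
    f i * weight w0 >
      ∑ w ∈ WC.filter (fun w => level w < i), f (level w) * weight w :=
  calc ∑ w ∈ WC.filter (fun w => level w < i), f (level w) * weight w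
      < f i := sum_filter_level_lt_lt_of_rec hWC hwmax hwle
        (fun w hw => (Finset.mem_Icc.mp (hlev w hw)).1) hf1 hfs hi1
    _ ≤ f i * weight w0 := Nat.le_mul_of_pos_right _ (hw1 w0 hw0)

/-- violating a single weak constraint of level `i` is more expensive than
violating all weak constraints of lower levels. -/
theorem single_violation_dominates_lower_levels {ι : Type*}
    (WC : Finset ι) (hWC : WC.Nonempty)
    (weight level : ι → ℕ) (wmax lmax : ℕ) (hlmax : 1 ≤ lmax) (hwmax : 1 ≤ wmax)
    (hw1 : ∀ w ∈ WC, 1 ≤ weight w) (hwle : ∀ w ∈ WC, weight w ≤ wmax)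
    (hlev : ∀ w ∈ WC, level w ∈ Finset.Icc 1 lmax)
    (f : ℕ → ℕ) (hf1 : f 1 = 1)
    (hfs : ∀ n : ℕ, 1 ≤ n → f (n + 1) = f n * (WC.card * wmax) + 1)
    (i : ℕ) (hi1 : 1 ≤ i) (hilmax : i ≤ lmax)
    (w0 : ι) (hw0 : w0 ∈ WC) (hlw0 : level w0 = i) :
    f i * weight w0 >
      ∑ w ∈ WC.filter (fun w => level w < i), f (level w) * weight w :=
  single_violation_dominates_lower_levels_general WC hWC weight level wmax lmax hwmax hw1 hwle hlev
    f hf1 hfs i hi1 w0 hw0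
end

section
/- The objective function H realizes the lexicographic comparison of level-wise violation costs with higher levels more significant: for all V_A, V_B ⊆ WC, H(V_A) < H(V_B) if and only if there exists a level i ∈ {1,…,lmax} such that Σ_{w ∈ V_A, level(w) = j} weight(w) = Σ_{w ∈ V_B, level(w) = j} weight(w) for all j with i < j ≤ lmax, and Σ_{w ∈ V_A, level(w) = i} weight(w) < Σ_{w ∈ V_B, level(w) = i} weight(w). -/
/-!
Since `f` is monotone and `f (n + 1) = f n * K + 1`, any sum `∑_{j ≤ n} f j * a j` with
`∑_{j ≤ n} a j ≤ K` is below `f (n + 1)`: the levels below `n + 1` act like the lower digits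
of a number in a mixed radix. Hence `H` compares the top level first and, on a tie, the
remaining levels, which by induction on the number of levels is the lexicographic order.
The bound `K = |WC| * wmax` covers the total weight of any `V ⊆ WC`.
-/

open Finset

theorem add_mul_lt_add_mul_iff_of_lt {F x y p q : ℕ} (hx : x < F) (hy : y < F) :
    x + F * p < y + F * q ↔ p < q ∨ p = q ∧ x < y := by
  have lt_of_lt {x y p q : ℕ} (hx : x < F) (hpq : p < q) : x + F * p < y + F * q :=
    calc x + F * p < F * (p + 1) := by rw [mul_add_one]; omega
      _ ≤ F * q := Nat.mul_le_mul_left F hpq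
      _ ≤ y + F * q := Nat.le_add_left _ _
  rcases lt_trichotomy p q with hpq | rfl | hqp
  · simp [hpq, lt_of_lt hx hpq]
  · simp
  · have := lt_of_lt (y := x) hy hqp
    constructor
    · omega
    · rintro (h | ⟨rfl, -⟩) <;> omega

theorem exists_lex_lt_Icc_succ_iff (a b : ℕ → ℕ) (n : ℕ) :
    (∃ i ∈ Icc 1 (n + 1), (∀ j, i < j → j ≤ n + 1 → a j = b j) ∧ a i < b i) ↔
      a (n + 1) < b (n + 1) ∨ a (n + 1) = b (n + 1) ∧
        ∃ i ∈ Icc 1 n, (∀ j, i < j → j ≤ n → a j = b j) ∧ a i < b i := by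
  constructor
  · rintro ⟨i, hi, heq, hlt⟩
    rw [mem_Icc] at hi
    rcases eq_or_lt_of_le hi.2 with rfl | hin
    · exact Or.inl hlt
    · exact Or.inr ⟨heq _ hin le_rfl,
        i, mem_Icc.2 ⟨hi.1, by omega⟩, fun j hij hjn => heq j hij (by omega), hlt⟩
  · rintro (hlt | ⟨htop, i, hi, heq, hlt⟩)
    · exact ⟨n + 1, mem_Icc.2 ⟨by omega, le_rfl⟩, fun j hj hj' => by omega, hlt⟩
    · rw [mem_Icc] at hi
      refine ⟨i, mem_Icc.2 ⟨hi.1, by omega⟩, fun j hij hjn => ?_, hlt⟩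
      rcases eq_or_lt_of_le hjn with rfl | hjn
      · exact htop
      · exact heq j hij (by omega)

section Weights

variable {f : ℕ → ℕ} {K : ℕ} (hf1 : f 1 = 1) (hfs : ∀ n, 1 ≤ n → f (n + 1) = f n * K + 1)
include hf1 hfs

theorem monotoneOn_Ici_one_of_succ_eq : MonotoneOn f (Set.Ici 1) := by
  refine monotoneOn_nat_Ici_of_le_succ fun n hn => ?_
  induction n, hn using Nat.le_induction with
  | base => simp [hfs 1 le_rfl, hf1]
  | succ n hn ih =>
    rw [hfs n hn, hfs (n + 1) (by omega)]
    gcongr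

theorem sum_Icc_mul_lt_succ {a : ℕ → ℕ} {n : ℕ} (ha : ∑ j ∈ Icc 1 n, a j ≤ K) :
    ∑ j ∈ Icc 1 n, f j * a j < f (n + 1) := by
  rcases Nat.eq_zero_or_pos n with rfl | hn
  · simp [hf1]
  calc ∑ j ∈ Icc 1 n, f j * a j ≤ ∑ j ∈ Icc 1 n, f n * a j := by
        refine sum_le_sum fun j hj => ?_
        rw [mem_Icc] at hj
        gcongr
        exact monotoneOn_Ici_one_of_succ_eq hf1 hfs hj.1 (Set.mem_Ici.2 hn) hj.2
    _ = f n * ∑ j ∈ Icc 1 n, a j := (mul_sum _ _ _).symm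
    _ ≤ f n * K := Nat.mul_le_mul_left _ ha
    _ < f (n + 1) := by rw [hfs n hn]; omega

theorem sum_Icc_mul_lt_iff_exists_lex {a b : ℕ → ℕ} {n : ℕ}
    (ha : ∑ j ∈ Icc 1 n, a j ≤ K) (hb : ∑ j ∈ Icc 1 n, b j ≤ K) :
    ∑ j ∈ Icc 1 n, f j * a j < ∑ j ∈ Icc 1 n, f j * b j ↔
      ∃ i ∈ Icc 1 n, (∀ j, i < j → j ≤ n → a j = b j) ∧ a i < b i := by
  induction n with
  | zero => simp
  | succ n ih =>
    rw [sum_Icc_succ_top (by omega)] at ha hb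
    rw [exists_lex_lt_Icc_succ_iff, sum_Icc_succ_top (by omega), sum_Icc_succ_top (by omega),
      add_mul_lt_add_mul_iff_of_lt (sum_Icc_mul_lt_succ hf1 hfs (by omega))
        (sum_Icc_mul_lt_succ hf1 hfs (by omega)), ih (by omega) (by omega)]

end Weights

theorem sum_level_le_card_mul {ι : Type*} (WC V : Finset ι) (hV : V ⊆ WC)
    (weight level : ι → ℕ) (wmax lmax : ℕ) (hwle : ∀ w ∈ WC, weight w ≤ wmax)
    (hlev : ∀ w ∈ WC, level w ∈ Icc 1 lmax) :
    ∑ i ∈ Icc 1 lmax, ∑ w ∈ V.filter (fun w => level w = i), weight w ≤ WC.card * wmax := by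
  rw [sum_fiberwise_of_maps_to fun w hw => hlev w (hV hw)]
  calc ∑ w ∈ V, weight w ≤ ∑ w ∈ WC, weight w := sum_le_sum_of_subset hV
    _ ≤ WC.card * wmax := by simpa using sum_le_card_nsmul WC weight wmax hwle

theorem H_lt_iff_lex_general {ι : Type*} (WC : Finset ι)
    (weight level : ι → ℕ) (wmax lmax : ℕ)
    (hwle : ∀ w ∈ WC, weight w ≤ wmax)
    (hlev : ∀ w ∈ WC, level w ∈ Finset.Icc 1 lmax)
    (f : ℕ → ℕ) (hf1 : f 1 = 1)
    (hfs : ∀ n : ℕ, 1 ≤ n → f (n + 1) = f n * (WC.card * wmax) + 1)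
    (VA VB : Finset ι) (hVA : VA ⊆ WC) (hVB : VB ⊆ WC) :
    (∑ i ∈ Finset.Icc 1 lmax,
        f i * ∑ w ∈ VA.filter (fun w => level w = i), weight w) <
      (∑ i ∈ Finset.Icc 1 lmax,
        f i * ∑ w ∈ VB.filter (fun w => level w = i), weight w) ↔
    ∃ i ∈ Finset.Icc 1 lmax,
      (∀ j : ℕ, i < j → j ≤ lmax →
        ∑ w ∈ VA.filter (fun w => level w = j), weight w =
          ∑ w ∈ VB.filter (fun w => level w = j), weight w) ∧
      ∑ w ∈ VA.filter (fun w => level w = i), weight w <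
        ∑ w ∈ VB.filter (fun w => level w = i), weight w :=
  sum_Icc_mul_lt_iff_exists_lex hf1 hfs
    (sum_level_le_card_mul WC VA hVA weight level wmax lmax hwle hlev)
    (sum_level_le_card_mul WC VB hVB weight level wmax lmax hwle hlev)

/-- the objective function `H` realizes the lexicographic comparison of the
level-wise violation costs, with higher levels being more significant. -/
theorem H_lt_iff_lex {ι : Type*} (WC : Finset ι) (hWC : WC.Nonempty)
    (weight level : ι → ℕ) (wmax lmax : ℕ) (hlmax : 1 ≤ lmax) (hwmax : 1 ≤ wmax)
    (hw1 : ∀ w ∈ WC, 1 ≤ weight w) (hwle : ∀ w ∈ WC, weight w ≤ wmax)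
    (hlev : ∀ w ∈ WC, level w ∈ Finset.Icc 1 lmax)
    (f : ℕ → ℕ) (hf1 : f 1 = 1)
    (hfs : ∀ n : ℕ, 1 ≤ n → f (n + 1) = f n * (WC.card * wmax) + 1)
    (VA VB : Finset ι) (hVA : VA ⊆ WC) (hVB : VB ⊆ WC) :
    (∑ i ∈ Finset.Icc 1 lmax,
        f i * ∑ w ∈ VA.filter (fun w => level w = i), weight w) <
      (∑ i ∈ Finset.Icc 1 lmax,
        f i * ∑ w ∈ VB.filter (fun w => level w = i), weight w) ↔
    ∃ i ∈ Finset.Icc 1 lmax,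
      (∀ j : ℕ, i < j → j ≤ lmax →
        ∑ w ∈ VA.filter (fun w => level w = j), weight w =
          ∑ w ∈ VB.filter (fun w => level w = j), weight w) ∧
      ∑ w ∈ VA.filter (fun w => level w = i), weight w <
        ∑ w ∈ VB.filter (fun w => level w = i), weight w :=
  H_lt_iff_lex_general WC weight level wmax lmax hwle hlev f hf1 hfs VA VB hVA hVB
end

section
/- The objective function H determines the level-wise violation costs uniquely: for all V_A, V_B ⊆ WC, H(V_A) = H(V_B) if and only if for every level i ∈ {1,…,lmax}, Σ_{w ∈ V_A, level(w) = i} weight(w) = Σ_{w ∈ V_B, level(w) = i} weight(w). -/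
/-!
The weights `f i` act as place values. With `B = |WC| * wmax`, the level sums of any `V ⊆ WC`
add up to at most `B`, while `f (n + 1) = f n * B + 1` exceeds `f n * B`. Hence the levels
`1, …, n` contribute less than `f (n + 1)` to `H`, so the level-`(n + 1)` sum is the quotient of
`H` by `f (n + 1)` and the remainder is `H` for the lower levels; induction on `lmax` recovers
every level sum from `H`.
-/

open Finset

theorem Nat.eq_and_eq_of_add_mul_eq_add_mul {a b c x y : ℕ} (ha : a < c) (hb : b < c)
    (h : a + c * x = b + c * y) : x = y ∧ a = b := by
  have hc : 0 < c := by omega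
  obtain ⟨hx, ha'⟩ := (Nat.div_mod_unique hc).2 ⟨h, ha⟩
  obtain ⟨hy, hb'⟩ := (Nat.div_mod_unique hc).2 ⟨rfl, hb⟩
  exact ⟨hx.symm.trans hy, ha'.symm.trans hb'⟩

section Positional

variable {B : ℕ} {f : ℕ → ℕ} (hfs : ∀ n, 1 ≤ n → f (n + 1) = f n * B + 1)
include hfs

theorem monotoneOn_of_succ_eq_mul_add_one (hB : 1 ≤ B) : MonotoneOn f {n | 1 ≤ n} :=
  monotoneOn_nat_Ici_of_le_succ fun n hn => by
    rw [hfs n hn]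
    nlinarith

theorem sum_Icc_mul_lt_succ_s11 (hB : 1 ≤ B) (hf1 : f 1 = 1) (n : ℕ) {s : ℕ → ℕ}
    (hs : ∑ i ∈ Icc 1 n, s i ≤ B) : ∑ i ∈ Icc 1 n, f i * s i < f (n + 1) := by
  rcases Nat.eq_zero_or_pos n with rfl | hn
  · simp [hf1]
  calc ∑ i ∈ Icc 1 n, f i * s i
      ≤ ∑ i ∈ Icc 1 n, f n * s i := by
        refine sum_le_sum fun i hi => Nat.mul_le_mul_right _ ?_
        have hi := mem_Icc.1 hi
        exact monotoneOn_of_succ_eq_mul_add_one hfs hB hi.1 (show 1 ≤ n by omega) hi.2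
    _ = f n * ∑ i ∈ Icc 1 n, s i := (mul_sum _ _ _).symm
    _ ≤ f n * B := Nat.mul_le_mul_left _ hs
    _ < f (n + 1) := by rw [hfs n hn]; omega

theorem eq_on_Icc_of_sum_Icc_mul_eq (hB : 1 ≤ B) (hf1 : f 1 = 1) (n : ℕ) {s t : ℕ → ℕ}
    (hs : ∑ i ∈ Icc 1 n, s i ≤ B) (ht : ∑ i ∈ Icc 1 n, t i ≤ B)
    (h : ∑ i ∈ Icc 1 n, f i * s i = ∑ i ∈ Icc 1 n, f i * t i) :
    ∀ i ∈ Icc 1 n, s i = t i := by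
  induction n with
  | zero => simp
  | succ n ih =>
    have hsub : Icc 1 n ⊆ Icc 1 (n + 1) := Icc_subset_Icc_right n.le_succ
    have hs' := (sum_le_sum_of_subset hsub).trans hs
    have ht' := (sum_le_sum_of_subset hsub).trans ht
    rw [sum_Icc_succ_top (by omega), sum_Icc_succ_top (by omega)] at h
    obtain ⟨htop, hlow⟩ := Nat.eq_and_eq_of_add_mul_eq_add_mul
      (sum_Icc_mul_lt_succ_s11 hfs hB hf1 n hs') (sum_Icc_mul_lt_succ_s11 hfs hB hf1 n ht') h
    intro i hi
    rcases (mem_Icc.1 hi).2.lt_or_eq with hlt | rfl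
    · exact ih hs' ht' hlow i (mem_Icc.2 ⟨(mem_Icc.1 hi).1, by omega⟩)
    · exact htop

end Positional

theorem sum_Icc_sum_filter_level_le {ι : Type*} {WC V : Finset ι} {weight level : ι → ℕ}
    {wmax lmax : ℕ} (hwle : ∀ w ∈ WC, weight w ≤ wmax)
    (hlev : ∀ w ∈ WC, level w ∈ Icc 1 lmax) (hV : V ⊆ WC) :
    ∑ i ∈ Icc 1 lmax, ∑ w ∈ V.filter (fun w => level w = i), weight w ≤ WC.card * wmax :=
  calc ∑ i ∈ Icc 1 lmax, ∑ w ∈ V.filter (fun w => level w = i), weight w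
      = ∑ w ∈ V, weight w := sum_fiberwise_of_maps_to (fun w hw => hlev w (hV hw)) _
    _ ≤ ∑ w ∈ WC, weight w := sum_le_sum_of_subset hV
    _ ≤ WC.card * wmax := by simpa using sum_le_card_nsmul WC weight wmax hwle

theorem H_eq_iff_levelwise_eq_general {ι : Type*} (WC : Finset ι) (hWC : WC.Nonempty)
    (weight level : ι → ℕ) (wmax lmax : ℕ) (hwmax : 1 ≤ wmax)
    (hwle : ∀ w ∈ WC, weight w ≤ wmax)
    (hlev : ∀ w ∈ WC, level w ∈ Finset.Icc 1 lmax)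
    (f : ℕ → ℕ) (hf1 : f 1 = 1)
    (hfs : ∀ n : ℕ, 1 ≤ n → f (n + 1) = f n * (WC.card * wmax) + 1)
    (VA VB : Finset ι) (hVA : VA ⊆ WC) (hVB : VB ⊆ WC) :
    (∑ i ∈ Finset.Icc 1 lmax,
        f i * ∑ w ∈ VA.filter (fun w => level w = i), weight w) =
      (∑ i ∈ Finset.Icc 1 lmax,
        f i * ∑ w ∈ VB.filter (fun w => level w = i), weight w) ↔
    ∀ i ∈ Finset.Icc 1 lmax,
      ∑ w ∈ VA.filter (fun w => level w = i), weight w =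
        ∑ w ∈ VB.filter (fun w => level w = i), weight w := by
  have hB : 1 ≤ WC.card * wmax := Nat.one_le_iff_ne_zero.2 <|
    Nat.mul_ne_zero (card_pos.2 hWC).ne' (by omega)
  refine ⟨fun h => ?_, fun h => sum_congr rfl fun i hi => by rw [h i hi]⟩
  exact eq_on_Icc_of_sum_Icc_mul_eq hfs hB hf1 lmax
    (sum_Icc_sum_filter_level_le hwle hlev hVA) (sum_Icc_sum_filter_level_le hwle hlev hVB) h

/-- the objective function `H` determines the level-wise violation costs
uniquely. -/
theorem H_eq_iff_levelwise_eq {ι : Type*} (WC : Finset ι) (hWC : WC.Nonempty)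
    (weight level : ι → ℕ) (wmax lmax : ℕ) (hlmax : 1 ≤ lmax) (hwmax : 1 ≤ wmax)
    (hw1 : ∀ w ∈ WC, 1 ≤ weight w) (hwle : ∀ w ∈ WC, weight w ≤ wmax)
    (hlev : ∀ w ∈ WC, level w ∈ Finset.Icc 1 lmax)
    (f : ℕ → ℕ) (hf1 : f 1 = 1)
    (hfs : ∀ n : ℕ, 1 ≤ n → f (n + 1) = f n * (WC.card * wmax) + 1)
    (VA VB : Finset ι) (hVA : VA ⊆ WC) (hVB : VB ⊆ WC) :
    (∑ i ∈ Finset.Icc 1 lmax,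
        f i * ∑ w ∈ VA.filter (fun w => level w = i), weight w) =
      (∑ i ∈ Finset.Icc 1 lmax,
        f i * ∑ w ∈ VB.filter (fun w => level w = i), weight w) ↔
    ∀ i ∈ Finset.Icc 1 lmax,
      ∑ w ∈ VA.filter (fun w => level w = i), weight w =
        ∑ w ∈ VB.filter (fun w => level w = i), weight w :=
  H_eq_iff_levelwise_eq_general WC hWC weight level wmax lmax hwmax hwle hlev f hf1 hfs VA VB hVA
    hVB
end
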